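/- Let ρ be a 4×4 Hermitian complex matrix and A, B invertible 2×2 complex matrices, and set ρ' = (A ⊗ B) ρ (A ⊗ B)†. Then R(ρ') = |det(A)| · |det(B)| · L(A) · R(ρ) · L(B)ᵀ, where L(A) = T (A ⊗ A̅) T† / |det(A)| and L(B) = T (B ⊗ B̅) T† / |det(B)| with T = (1/√2) · !![1,0,0,1; 0,1,1,0; 0,I,-I,0; 1,0,0,-1]. -/

import Mathlib

open Matrix Complex Kronecker
open scoped ComplexOrder

noncomputable section

/-- The Pauli matrix σ₀ (the 2×2 identity). -/
def pauli0 : Matrix (Fin 2) (Fin 2) ℂ := 1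
/-- The Pauli matrix σ₁. -/
def pauli1 : Matrix (Fin 2) (Fin 2) ℂ := !![0, 1; 1, 0]
/-- The Pauli matrix σ₂. -/
def pauli2 : Matrix (Fin 2) (Fin 2) ℂ := !![0, -I; I, 0]
/-- The Pauli matrix σ₃. -/
def pauli3 : Matrix (Fin 2) (Fin 2) ℂ := !![1, 0; 0, -1]

/-- The four Pauli matrices. -/
def pauli : Fin 4 → Matrix (Fin 2) (Fin 2) ℂ := ![pauli0, pauli1, pauli2, pauli3]

/-- Kronecker product of two 2×2 complex matrices as a 4×4 matrix, with
entry `(2i+j, 2k+l)` equal to `A i k * B j l`. -/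
def kron (A B : Matrix (Fin 2) (Fin 2) ℂ) : Matrix (Fin 4) (Fin 4) ℂ :=
  Matrix.reindex finProdFinEquiv finProdFinEquiv (A ⊗ₖ B)

/-- The Lorentz metric matrix `diag(1,-1,-1,-1)`. -/
def Mmetric : Matrix (Fin 4) (Fin 4) ℝ := Matrix.diagonal ![1, -1, -1, -1]

/-- A real 4×4 matrix is a proper orthochronous Lorentz transformation if
`L M Lᵀ = M`, `det L = 1` and `L₀₀ > 0`. -/
def IsProperOrthochronousLorentz (L : Matrix (Fin 4) (Fin 4) ℝ) : Prop :=
  L * Mmetric * Lᵀ = Mmetric ∧ L.det = 1 ∧ 0 < L 0 0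

/-- The matrix `T` transforming the density-matrix picture to the `R`-picture. -/
def Tmat : Matrix (Fin 4) (Fin 4) ℂ :=
  ((Real.sqrt 2 : ℂ))⁻¹ • !![1, 0, 0, 1; 0, 1, 1, 0; 0, I, -I, 0; 1, 0, 0, -1]

/-- The real parameterization `R(ρ)ᵢⱼ = Tr(ρ (σᵢ ⊗ σⱼ))` of a 4×4 matrix. -/
def Rmat (ρ : Matrix (Fin 4) (Fin 4) ℂ) : Matrix (Fin 4) (Fin 4) ℂ :=
  fun i j => Matrix.trace (ρ * kron (pauli i) (pauli j))

/-- The Lorentz transformation `L(A) = T (A ⊗ A̅) T† / |det A|` associated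
with a 2×2 matrix `A`. -/
def Lmat (A : Matrix (Fin 2) (Fin 2) ℂ) : Matrix (Fin 4) (Fin 4) ℂ :=
  ((‖A.det‖ : ℂ))⁻¹ • (Tmat * kron A (A.map (starRingEnd ℂ)) * Tmatᴴ)

/-- The singular values of a 4×4 complex matrix: the nonnegative square roots of
the eigenvalues of `Mᴴ M`. -/
def singularValues (M : Matrix (Fin 4) (Fin 4) ℂ) : Fin 4 → ℝ :=
  fun i => Real.sqrt ((Matrix.isHermitian_conjTranspose_mul_self M).eigenvalues i)

/-- The multiset of singular values of a 4×4 complex matrix. -/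
def singularValuesMultiset (M : Matrix (Fin 4) (Fin 4) ℂ) : Multiset ℝ :=
  Finset.univ.val.map (singularValues M)

/-- The square root of a positive semidefinite matrix (the former `Matrix.PosSemidef.sqrt`). -/
def posSemidefSqrt {ρ : Matrix (Fin 4) (Fin 4) ℂ} (h : ρ.PosSemidef) : Matrix (Fin 4) (Fin 4) ℂ :=
  (h.1.eigenvectorUnitary : Matrix (Fin 4) (Fin 4) ℂ) * diagonal ((↑) ∘ Real.sqrt ∘ h.1.eigenvalues) *
    (star h.1.eigenvectorUnitary : Matrix (Fin 4) (Fin 4) ℂ)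

open scoped Classical in
/-- The concurrence of a two-qubit state `ρ`:
`max (0, τ₁ - τ₂ - τ₃ - τ₄) = max (0, 2 max τᵢ - ∑ τᵢ)` where the `τᵢ` are the
singular values of `Xᵀ (σ₂ ⊗ σ₂) X` with `ρ = X Xᴴ` (here `X = √ρ`). -/
def concurrence (ρ : Matrix (Fin 4) (Fin 4) ℂ) : ℝ :=
  if h : ρ.PosSemidef then
    let τ := singularValues ((posSemidefSqrt h)ᵀ * kron pauli2 pauli2 * posSemidefSqrt h)
    max 0 (2 * Finset.univ.sup' Finset.univ_nonempty τ - ∑ i, τ i)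
  else 0

/-- A two-qubit density matrix: positive semidefinite with trace 1. -/
def IsDensityMatrix (ρ : Matrix (Fin 4) (Fin 4) ℂ) : Prop :=
  ρ.PosSemidef ∧ ρ.trace = 1

/-- The reshuffled matrix `X̃` with `X̃_{2k+l,2k'+l'} = X_{2k+k',2l+l'}`. -/
def reshuffle (X : Matrix (Fin 4) (Fin 4) ℂ) : Matrix (Fin 4) (Fin 4) ℂ :=
  fun i j =>
    X ⟨2 * (i.val / 2) + j.val / 2, by have := i.isLt; have := j.isLt; omega⟩
      ⟨2 * (i.val % 2) + j.val % 2, by have := i.isLt; have := j.isLt; omega⟩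

/-- The partial transpose on the second qubit:
`(ρ^PT)_{2i+j,2k+l} = ρ_{2i+l,2k+j}`. -/
def ptranspose (ρ : Matrix (Fin 4) (Fin 4) ℂ) : Matrix (Fin 4) (Fin 4) ℂ :=
  fun a b =>
    ρ ⟨2 * (a.val / 2) + b.val % 2, by have := a.isLt; have := b.isLt; omega⟩
      ⟨2 * (b.val / 2) + a.val % 2, by have := a.isLt; have := b.isLt; omega⟩


lemma kron_mul (A B C D : Matrix (Fin 2) (Fin 2) ℂ) :
    kron A B * kron C D = kron (A * C) (B * D) := by
  simp only [kron, reindex_apply, submatrix_mul_equiv, Matrix.mul_kronecker_mul]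

lemma kron_conjT (A B : Matrix (Fin 2) (Fin 2) ℂ) : (kron A B)ᴴ = kron Aᴴ Bᴴ := by
  ext i j
  simp [kron, conjTranspose_apply, kroneckerMap_apply, mul_comm]

lemma kron_smul_left (c : ℂ) (A B : Matrix (Fin 2) (Fin 2) ℂ) :
    kron (c • A) B = c • kron A B := by
  ext i j; simp [kron, kroneckerMap_apply, mul_assoc]

lemma kron_smul_right (c : ℂ) (A B : Matrix (Fin 2) (Fin 2) ℂ) :
    kron A (c • B) = c • kron A B := by
  ext i j; simp [kron, kroneckerMap_apply]; ring

lemma kron_sum_left {n : ℕ} (f : Fin n → Matrix (Fin 2) (Fin 2) ℂ) (B : Matrix (Fin 2) (Fin 2) ℂ) :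
    kron (∑ k, f k) B = ∑ k, kron (f k) B := by
  ext i j; simp [kron, kroneckerMap_apply, Finset.sum_mul, Matrix.sum_apply]

lemma kron_sum_right {n : ℕ} (A : Matrix (Fin 2) (Fin 2) ℂ) (f : Fin n → Matrix (Fin 2) (Fin 2) ℂ) :
    kron A (∑ k, f k) = ∑ k, kron A (f k) := by
  ext i j; simp [kron, kroneckerMap_apply, Finset.mul_sum, Matrix.sum_apply]

lemma kron_eq (A B : Matrix (Fin 2) (Fin 2) ℂ) :
    kron A B = !![A 0 0 * B 0 0, A 0 0 * B 0 1, A 0 1 * B 0 0, A 0 1 * B 0 1;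
                  A 0 0 * B 1 0, A 0 0 * B 1 1, A 0 1 * B 1 0, A 0 1 * B 1 1;
                  A 1 0 * B 0 0, A 1 0 * B 0 1, A 1 1 * B 0 0, A 1 1 * B 0 1;
                  A 1 0 * B 1 0, A 1 0 * B 1 1, A 1 1 * B 1 0, A 1 1 * B 1 1] := by
  ext i j
  fin_cases i <;> fin_cases j <;> rfl

lemma pauli_expand (M : Matrix (Fin 2) (Fin 2) ℂ) :
    M = ∑ k : Fin 4, ((2:ℂ)⁻¹ * Matrix.trace (M * pauli k)) • pauli k := by
  ext i j
  fin_cases i <;> fin_cases j <;>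
    simp [pauli, pauli0, pauli1, pauli2, pauli3, Matrix.trace, Matrix.mul_apply,
      Fin.sum_univ_succ, Matrix.sum_apply, Matrix.one_apply] <;>
    ring_nf <;> simp [Complex.I_sq] <;> ring

set_option maxHeartbeats 2000000 in
lemma Lmat_entry (A : Matrix (Fin 2) (Fin 2) ℂ) (i k : Fin 4) :
    (Tmat * kron A (A.map (starRingEnd ℂ)) * Tmatᴴ) i k =
      (2:ℂ)⁻¹ * Matrix.trace (pauli i * A * pauli k * Aᴴ) := by
  have h2 : ((Real.sqrt 2 : ℂ))⁻¹ * ((Real.sqrt 2 : ℂ))⁻¹ = 2⁻¹ := by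
    rw [← mul_inv]
    norm_cast
    rw [Real.mul_self_sqrt (by norm_num)]
    norm_num
  fin_cases i <;> fin_cases k <;>
    simp [Tmat, kron_eq, pauli, pauli0, pauli1, pauli2, pauli3, Matrix.trace,
      Matrix.mul_apply, Fin.sum_univ_four, Matrix.one_apply, Matrix.conjTranspose_apply,
      Matrix.map_apply, Complex.conj_ofReal, Matrix.vecMul, dotProduct,
      Fin.sum_univ_two] <;>
    ring_nf <;>
    simp only [Complex.I_sq, sq, h2, mul_comm, mul_left_comm] <;> ring_nf

lemma conj_pauli_expand (C : Matrix (Fin 2) (Fin 2) ℂ) (i : Fin 4) :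
    Cᴴ * pauli i * C =
      ∑ k : Fin 4, ((Tmat * kron C (C.map (starRingEnd ℂ)) * Tmatᴴ) i k) • pauli k := by
  conv_lhs => rw [pauli_expand (Cᴴ * pauli i * C)]
  refine Finset.sum_congr rfl fun k _ => ?_
  rw [Lmat_entry]
  congr 2
  rw [show Cᴴ * pauli i * C * pauli k = Cᴴ * (pauli i * C * pauli k) by
    simp only [Matrix.mul_assoc], Matrix.trace_mul_comm]


/-- `R(ρ') = |det A| |det B| · L(A) R(ρ) L(B)ᵀ` for
`ρ' = (A ⊗ B) ρ (A ⊗ B)†`. -/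
theorem Rmat_filtering (ρ : Matrix (Fin 4) (Fin 4) ℂ) (hρ : ρ.IsHermitian)
    (A B : Matrix (Fin 2) (Fin 2) ℂ) (hA : IsUnit A) (hB : IsUnit B) :
    Rmat (kron A B * ρ * (kron A B)ᴴ) =
      ((‖A.det‖ * ‖B.det‖ : ℝ) : ℂ) • (Lmat A * Rmat ρ * (Lmat B)ᵀ) := by
  have hAd : A.det ≠ 0 := (Matrix.isUnit_iff_isUnit_det A).mp hA |>.ne_zero
  have hBd : B.det ≠ 0 := (Matrix.isUnit_iff_isUnit_det B).mp hB |>.ne_zero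
  have hA0 : (‖A.det‖ : ℂ) ≠ 0 := by
    simpa using (norm_ne_zero_iff.mpr hAd)
  have hB0 : (‖B.det‖ : ℂ) ≠ 0 := by
    simpa using (norm_ne_zero_iff.mpr hBd)
  set LA := Tmat * kron A (A.map (starRingEnd ℂ)) * Tmatᴴ with hLA
  set LB := Tmat * kron B (B.map (starRingEnd ℂ)) * Tmatᴴ with hLB
  have hRHS : ((‖A.det‖ * ‖B.det‖ : ℝ) : ℂ) • (Lmat A * Rmat ρ * (Lmat B)ᵀ)
      = LA * Rmat ρ * LBᵀ := by
    rw [Lmat, Lmat, ← hLA, ← hLB, Matrix.transpose_smul, Matrix.smul_mul, Matrix.mul_smul,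
      Matrix.smul_mul, smul_smul, smul_smul]
    convert one_smul ℂ (LA * Rmat ρ * LBᵀ) using 2
    push_cast
    field_simp
  rw [hRHS]
  ext i j
  have step1 : Rmat (kron A B * ρ * (kron A B)ᴴ) i j
      = Matrix.trace (ρ * kron (Aᴴ * pauli i * A) (Bᴴ * pauli j * B)) := by
    show Matrix.trace (kron A B * ρ * (kron A B)ᴴ * kron (pauli i) (pauli j)) = _
    rw [kron_conjT]
    rw [show kron A B * ρ * kron Aᴴ Bᴴ * kron (pauli i) (pauli j)
        = kron A B * (ρ * (kron Aᴴ Bᴴ * kron (pauli i) (pauli j))) by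
      simp only [Matrix.mul_assoc]]
    rw [Matrix.trace_mul_comm, Matrix.mul_assoc, kron_mul, kron_mul]
  rw [step1, conj_pauli_expand A i, conj_pauli_expand B j, kron_sum_left]
  simp only [kron_smul_left, kron_sum_right, kron_smul_right, Finset.smul_sum,
    Matrix.mul_sum, Matrix.mul_smul, Matrix.trace_sum, Matrix.trace_smul, smul_eq_mul,
    smul_smul]
  rw [show (LA * Rmat ρ * LBᵀ) i j = ∑ l : Fin 4, ∑ k : Fin 4,
      LA i k * Rmat ρ k l * LB j l by
    simp [Matrix.mul_apply, Matrix.transpose_apply, Finset.sum_mul]]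
  rw [Finset.sum_comm]
  refine Finset.sum_congr rfl fun k _ => Finset.sum_congr rfl fun l _ => ?_
  rw [Rmat]
  ring
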